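/- arXiv:1805.09266 — 2 statements merged into one kernel-verified Lean document; each statement's English description precedes it below -/
import Mathlib

section
/- Decentralized message passing correctness on a tree: in a finite tree graph of agents where M_{ij}^{t+1} = R̂_i + ∑_{k∈N(i)\{j}} (M_{ki}^t − R_0) with M_{ij}^0 = R̂_i, the message M_{ij}^t equals ∑_{v ∈ B_t(i,j)} R̂_v − (|B_t(i,j)| − 1)·R_0, where B_t(i,j) is the set of vertices reachable from i within t edges without passing through j. -/
/-!
Writing the claimed value as `R₀ + ∑_{v ∈ B_t(i,j)} (R̂_v - R₀)` turns the recursion into plain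
additivity over vertex sets. In an acyclic graph, `B_{t+1}(i,j)` is the disjoint union of `{i}`
and the sets `B_t(k,i)` for `k ∈ N(i) \ {j}`: a path from `v ≠ i` to `i` is a path to its
penultimate vertex `k` followed by the edge `(k,i)`, and uniqueness of paths makes the branches
disjoint and keeps `i` out of them.
-/

namespace SimpleGraph

variable {V : Type*} {G : SimpleGraph V}

def branchBall (G : SimpleGraph V) (t : ℕ) (i j : V) : Set V :=
  {v | ∃ p : G.Walk v i, p.IsPath ∧ p.length ≤ t ∧ s(i, j) ∉ p.edges}

lemma branchBall_zero (i j : V) : G.branchBall 0 i j = {i} := by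
  ext v
  constructor
  · rintro ⟨p, -, hlen, -⟩
    exact Walk.eq_of_length_eq_zero (Nat.le_zero.mp hlen)
  · rintro rfl
    exact ⟨Walk.nil, Walk.IsPath.nil, le_rfl, by simp⟩

-- In an acyclic graph, a path to `k` through its neighbour `i` ends with the edge `s(i, k)`.
lemma IsAcyclic.notMem_support_of_notMem_edges (hG : G.IsAcyclic) {v k i : V} {q : G.Walk v k}
    (hq : q.IsPath) (hki : G.Adj k i) (he : s(k, i) ∉ q.edges) : i ∉ q.support := by
  intro hi
  have hnil : ¬q.Nil := fun hnil =>
    hki.ne' ((List.mem_singleton.mp (Walk.nil_iff_support_eq.mp hnil ▸ hi)).trans hnil.eq)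
  have hpen : i = q.penultimate := hG.eq_penultimate_of_adj_end hq hki hi
  exact he (Sym2.eq_swap ▸ hpen ▸ q.mk_penultimate_end_mem_edges hnil)

lemma IsAcyclic.mem_branchBall_iff (hG : G.IsAcyclic) {t : ℕ} {v k i : V} (hki : G.Adj k i) :
    v ∈ G.branchBall t k i ↔
      ∃ q : G.Walk v k, q.IsPath ∧ q.length ≤ t ∧ i ∉ q.support := by
  constructor
  · rintro ⟨q, hq, hlen, he⟩
    exact ⟨q, hq, hlen, hG.notMem_support_of_notMem_edges hq hki he⟩
  · rintro ⟨q, hq, hlen, hi⟩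
    exact ⟨q, hq, hlen, fun he => hi (q.snd_mem_support_of_mem_edges he)⟩

lemma IsAcyclic.notMem_branchBall (hG : G.IsAcyclic) (t : ℕ) {k i : V} (hki : G.Adj k i) :
    i ∉ G.branchBall t k i := by
  rintro hi
  obtain ⟨q, -, -, hiq⟩ := (hG.mem_branchBall_iff hki).mp hi
  exact hiq q.start_mem_support

lemma IsAcyclic.pairwiseDisjoint_branchBall (hG : G.IsAcyclic) (t : ℕ) (i : V) :
    (G.neighborSet i).PairwiseDisjoint (fun k => G.branchBall t k i) := by
  intro k hk k' hk' hne
  refine Set.disjoint_left.mpr fun v hv hv' => hne ?_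
  obtain ⟨q, hq, -, hiq⟩ := (hG.mem_branchBall_iff (G.adj_symm hk)).mp hv
  obtain ⟨q', hq', -, hiq'⟩ := (hG.mem_branchBall_iff (G.adj_symm hk')).mp hv'
  have hpaths := (hG.subsingleton_path v i).elim ⟨_, hq.concat hiq (G.adj_symm hk)⟩
    ⟨_, hq'.concat hiq' (G.adj_symm hk')⟩
  exact (Walk.concat_inj (Subtype.mk.inj hpaths)).1

lemma IsAcyclic.branchBall_succ (hG : G.IsAcyclic) (t : ℕ) (i j : V) :
    G.branchBall (t + 1) i j = insert i (⋃ k ∈ G.neighborSet i \ {j}, G.branchBall t k i) := by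
  ext v
  simp only [Set.mem_insert_iff, Set.mem_iUnion, Set.mem_sdiff, mem_neighborSet,
    Set.mem_singleton_iff, exists_prop]
  constructor
  · rintro ⟨p, hp, hlen, he⟩
    by_cases hnil : p.Nil
    · exact Or.inl hnil.eq
    right
    have hadj := Walk.adj_penultimate hnil
    have hpq := Walk.concat_dropLast hadj
    rw [← hpq, Walk.concat_isPath_iff] at hp
    rw [← hpq, Walk.length_concat] at hlen
    refine ⟨p.penultimate, ⟨G.adj_symm hadj, ?_⟩, ?_⟩
    · rintro hj
      exact he (hj ▸ Sym2.eq_swap ▸ p.mk_penultimate_end_mem_edges hnil)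
    · exact (hG.mem_branchBall_iff hadj).mpr ⟨_, hp.1, by omega, hp.2⟩
  · rintro (rfl | ⟨k, ⟨hik, hkj⟩, hv⟩)
    · exact ⟨Walk.nil, Walk.IsPath.nil, Nat.zero_le _, by simp⟩
    obtain ⟨q, hq, hlen, hiq⟩ := (hG.mem_branchBall_iff (G.adj_symm hik)).mp hv
    refine ⟨q.concat (G.adj_symm hik), hq.concat hiq _, by simpa using hlen, ?_⟩
    rw [Walk.edges_concat, List.concat_eq_append, List.mem_append, List.mem_singleton,
      Sym2.eq_swap (a := k), Sym2.congr_right, not_or]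
    exact ⟨fun he => hiq (q.fst_mem_support_of_mem_edges he), Ne.symm hkj⟩

lemma IsAcyclic.finsum_mem_branchBall_succ [Finite V] [DecidableEq V] {M : Type*}
    [AddCommMonoid M] (hG : G.IsAcyclic) (f : V → M) (t : ℕ) (i j : V)
    [Fintype (G.neighborSet i)] :
    ∑ᶠ v ∈ G.branchBall (t + 1) i j, f v =
      f i + ∑ k ∈ (G.neighborFinset i).erase j, ∑ᶠ v ∈ G.branchBall t k i, f v := by
  have hN : G.neighborSet i \ {j} = ↑((G.neighborFinset i).erase j) := by simp
  have hi : i ∉ ⋃ k ∈ G.neighborSet i \ {j}, G.branchBall t k i := by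
    simpa using fun k hik _ => hG.notMem_branchBall t (G.adj_symm hik)
  rw [hG.branchBall_succ, finsum_mem_insert _ hi (Set.toFinite _),
    finsum_mem_biUnion ((hG.pairwiseDisjoint_branchBall t i).subset Set.sdiff_subset)
      (Set.toFinite _) fun _ _ => Set.toFinite _, hN, finsum_mem_coe_finset]

end SimpleGraph

lemma add_finsum_mem_sub_const {α A : Type*} [AddCommGroup A] {s : Set α} (hs : s.Finite)
    (f : α → A) (c : A) :
    c + ∑ᶠ v ∈ s, (f v - c) = (∑ᶠ v ∈ s, f v) - ((s.ncard : ℤ) - 1) • c := by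
  rw [finsum_mem_sub_distrib _ _ hs, finsum_mem_eq_finite_toFinset_sum (fun _ => c) hs,
    Finset.sum_const, ← Set.ncard_eq_toFinset_card s hs, sub_smul, one_smul, natCast_zsmul]
  abel

/-- Decentralized message-passing correctness on a tree: in a finite tree of
agents where messages obey `M_{ij}^0 = R̂_i` and
`M_{ij}^{t+1} = R̂_i + ∑_{k ∈ N(i)\{j}} (M_{ki}^t − R_0)`, the message
`M_{ij}^t` (for `j` a neighbor of `i`) equals
`∑_{v ∈ B_t(i,j)} R̂_v − (|B_t(i,j)| − 1)·R_0`, where `B_t(i,j)` is the set of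
vertices whose unique path to `i` has length at most `t` and does not use the
edge `(i,j)`. -/
theorem tree_message_passing {V : Type*} [Fintype V] [DecidableEq V]
    (G : SimpleGraph V) [DecidableRel G.Adj] (hT : G.IsTree)
    {A : Type*} [AddCommGroup A]
    (Rh : V → A) (R0 : A) (M : ℕ → V → V → A)
    (h0 : ∀ i j, M 0 i j = Rh i)
    (hrec : ∀ t i j, M (t + 1) i j =
      Rh i + ∑ k ∈ (G.neighborFinset i).erase j, (M t k i - R0)) :
    ∀ (t : ℕ) (i j : V), G.Adj i j →
      M t i j =
        (∑ᶠ v ∈ {v : V | ∃ p : G.Walk v i, p.IsPath ∧ p.length ≤ t ∧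
            s(i, j) ∉ p.edges}, Rh v) -
          ((({v : V | ∃ p : G.Walk v i, p.IsPath ∧ p.length ≤ t ∧
            s(i, j) ∉ p.edges}).ncard : ℤ) - 1) • R0 := by
  suffices key : ∀ t i j, G.Adj i j → M t i j = R0 + ∑ᶠ v ∈ G.branchBall t i j, (Rh v - R0) by
    intro t i j hij
    rw [key t i j hij]
    exact add_finsum_mem_sub_const (Set.toFinite _) Rh R0
  intro t
  induction t with
  | zero =>
    intro i j _
    rw [h0, SimpleGraph.branchBall_zero, finsum_mem_singleton, add_sub_cancel]
  | succ t ih =>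
    intro i j _
    rw [hrec, hT.isAcyclic.finsum_mem_branchBall_succ, ← add_assoc, add_sub_cancel]
    refine congrArg (Rh i + ·) (Finset.sum_congr rfl fun k hk => ?_)
    rw [ih k i (G.adj_symm ((G.mem_neighborFinset i k).mp (Finset.mem_of_mem_erase hk))),
      add_sub_cancel_left]
end

section
/- Global aggregation convergence on a tree: in the message-passing scheme above, once t exceeds the diameter of the tree, each agent i's aggregate R̂_i + ∑_{k∈N(i)} (M_{ki}^t − R_0) equals the global representation R̂_g = ∑_{v=1}^s R̂_v − (s−1)R_0, independent of i. -/
open Finset BigOperators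

section Aux

variable {V : Type*} [Fintype V] [DecidableEq V] (G : SimpleGraph V) [DecidableRel G.Adj]

/-- In a tree, every path between two vertices has length equal to the distance. -/
lemma tree_path_length (hT : G.IsTree) {a b : V} (p : G.Walk a b) (hp : p.IsPath) :
    p.length = G.dist a b := by
  obtain ⟨w, hw⟩ := hT.isConnected.exists_walk_length_eq_dist a b
  have hwp : w.IsPath := w.isPath_of_length_eq_dist hw
  have : (⟨p, hp⟩ : G.Path a b) = ⟨w, hwp⟩ := hT.IsAcyclic.path_unique _ _
  rw [show p = w from congrArg Subtype.val this, hw]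

/-- In a tree, adjacent vertices have different distances to any vertex. -/
lemma tree_dist_ne (hT : G.IsTree) {i k : V} (hik : G.Adj i k) (v : V) :
    G.dist v i ≠ G.dist v k := by
  intro h
  obtain ⟨p, hp⟩ := hT.isConnected.exists_walk_length_eq_dist k v
  have hpp : p.IsPath := p.isPath_of_length_eq_dist hp
  have hplen : p.length = G.dist v k := by rw [hp, SimpleGraph.dist_comm]
  have hins : i ∉ p.support := by
    intro hi
    have hsplit : (p.takeUntil i hi).length + (p.dropUntil i hi).length = p.length := by
      rw [← SimpleGraph.Walk.length_append, SimpleGraph.Walk.take_spec]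
    have htpos : 1 ≤ (p.takeUntil i hi).length := by
      rcases Nat.eq_zero_or_pos (p.takeUntil i hi).length with h0 | h0
      · exact absurd (SimpleGraph.Walk.eq_of_length_eq_zero h0).symm hik.ne
      · exact h0
    have hdrop : G.dist i v ≤ (p.dropUntil i hi).length := SimpleGraph.dist_le _
    have hcomm : G.dist i v = G.dist v i := SimpleGraph.dist_comm ..
    omega
  have hq : (SimpleGraph.Walk.cons hik p).IsPath := by
    rw [SimpleGraph.Walk.cons_isPath_iff]
    exact ⟨hpp, hins⟩
  have hfin := tree_path_length G hT _ hq
  rw [SimpleGraph.Walk.length_cons, hplen] at hfin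
  have hcomm : G.dist i v = G.dist v i := SimpleGraph.dist_comm ..
  omega

/-- In a tree, the neighbor of `k` strictly closer to `v` is unique. -/
lemma tree_parent_unique (hT : G.IsTree) {k j j' v : V} (h1 : G.Adj k j) (h2 : G.Adj k j')
    (d1 : G.dist v j + 1 = G.dist v k) (d2 : G.dist v j' + 1 = G.dist v k) : j = j' := by
  have key : ∀ (j : V) (h : G.Adj k j) (hd : G.dist v j + 1 = G.dist v k),
      ∃ (p : G.Walk j v) (hp : (SimpleGraph.Walk.cons h p).IsPath),
        (⟨_, hp⟩ : G.Path k v) = (hT.isConnected.exists_walk_length_eq_dist k v).choose.toPath := by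
    intro j h hd
    obtain ⟨p, hp⟩ := hT.isConnected.exists_walk_length_eq_dist j v
    have hpp : p.IsPath := p.isPath_of_length_eq_dist hp
    have hkns : k ∉ p.support := by
      intro hk
      have h1 : G.dist k v ≤ (p.dropUntil k hk).length := SimpleGraph.dist_le _
      have h2 : (p.takeUntil k hk).length + (p.dropUntil k hk).length = p.length := by
        rw [← SimpleGraph.Walk.length_append, SimpleGraph.Walk.take_spec]
      have h3 : p.length = G.dist j v := hp
      have h4 : G.dist j v = G.dist v j := SimpleGraph.dist_comm ..
      have h5 : G.dist k v = G.dist v k := SimpleGraph.dist_comm ..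
      omega
    have hcons : (SimpleGraph.Walk.cons h p).IsPath := by
      rw [SimpleGraph.Walk.cons_isPath_iff]
      exact ⟨hpp, hkns⟩
    exact ⟨p, hcons, hT.IsAcyclic.path_unique _ _⟩
  obtain ⟨p, hp, he⟩ := key j h1 d1
  obtain ⟨p', hp', he'⟩ := key j' h2 d2
  have : (⟨_, hp⟩ : G.Path k v) = ⟨_, hp'⟩ := he.trans he'.symm
  have hw : SimpleGraph.Walk.cons h1 p = SimpleGraph.Walk.cons h2 p' :=
    congrArg Subtype.val this
  have := congrArg (fun w => w.getVert 1) hw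
  simpa [SimpleGraph.Walk.getVert_cons_succ] using this

/-- In a tree, every vertex `v ≠ k` has a neighbor of `k` strictly closer to `v`. -/
lemma tree_parent_exists (hT : G.IsTree) {v k : V} (hne : v ≠ k) :
    ∃ j, G.Adj k j ∧ G.dist v j + 1 = G.dist v k := by
  have hdpos : 0 < G.dist v k := hT.isConnected.pos_dist_of_ne hne
  obtain ⟨w, hw⟩ := hT.isConnected.exists_walk_length_eq_dist k v
  have hkv : G.dist k v = G.dist v k := SimpleGraph.dist_comm ..
  cases w with
  | nil => rw [SimpleGraph.Walk.length_nil, hkv] at hw; omega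
  | @cons _ j _ h w' =>
    refine ⟨j, h, ?_⟩
    have h1 : G.dist j v ≤ w'.length := SimpleGraph.dist_le _
    have h2 : w'.length + 1 = G.dist v k := by
      rw [← hkv, ← hw, SimpleGraph.Walk.length_cons]
    have h3 : G.dist j v = G.dist v j := SimpleGraph.dist_comm ..
    have h4 : G.dist j k = 1 := SimpleGraph.dist_eq_one_iff_adj.mpr h.symm
    have h5 : G.dist v k ≤ G.dist v j + G.dist j k :=
      hT.isConnected.dist_triangle
    omega

/-- `dist` increases by exactly one across an edge, for vertices on the near side. -/
lemma tree_dist_succ (hT : G.IsTree) {k i : V} (h : G.Adj k i) {v : V}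
    (hv : G.dist v k < G.dist v i) : G.dist v i = G.dist v k + 1 := by
  have h1 : G.dist v i ≤ G.dist v k + G.dist k i := hT.isConnected.dist_triangle
  have h2 : G.dist k i = 1 := SimpleGraph.dist_eq_one_iff_adj.mpr h
  omega

/-- The branch of the tree hanging off `k`, away from `i`. -/
noncomputable def branch (k i : V) : Finset V := univ.filter (fun v => G.dist v k < G.dist v i)

lemma mem_branch {k i v : V} : v ∈ branch G k i ↔ G.dist v k < G.dist v i := by
  simp [branch]

lemma branch_disjoint (hT : G.IsTree) {c j j' : V} (h : G.Adj c j) (h' : G.Adj c j')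
    (hne : j ≠ j') : Disjoint (branch G j c) (branch G j' c) := by
  rw [Finset.disjoint_left]
  intro v hv hv'
  rw [mem_branch] at hv hv'
  exact hne (tree_parent_unique G hT h h'
    (tree_dist_succ G hT h.symm hv).symm (tree_dist_succ G hT h'.symm hv').symm)

lemma self_mem_branch (hT : G.IsTree) {k i : V} (h : G.Adj k i) : k ∈ branch G k i := by
  rw [mem_branch, SimpleGraph.dist_self, SimpleGraph.dist_comm]
  exact hT.isConnected.pos_dist_of_ne h.ne'

lemma self_not_mem_branch {c j : V} : c ∉ branch G j c := by
  rw [mem_branch, SimpleGraph.dist_self]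
  omega

/-- Decomposition of a branch into its root and sub-branches. -/
lemma branch_decomp (hT : G.IsTree) {k i : V} (hki : G.Adj k i) :
    branch G k i =
      insert k (((G.neighborFinset k).erase i).biUnion (fun j => branch G j k)) := by
  ext v
  simp only [Finset.mem_insert, Finset.mem_biUnion, Finset.mem_erase,
    SimpleGraph.mem_neighborFinset]
  constructor
  · intro hv
    rw [mem_branch] at hv
    by_cases hvk : v = k
    · exact Or.inl hvk
    · obtain ⟨j, hj, hjd⟩ := tree_parent_exists G hT hvk
      refine Or.inr ⟨j, ⟨?_, hj⟩, ?_⟩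
      · intro hji
        rw [hji] at hjd
        omega
      · rw [mem_branch]; omega
  · rintro (rfl | ⟨j, ⟨hji, hj⟩, hv⟩)
    · exact self_mem_branch G hT hki
    · rw [mem_branch] at hv ⊢
      have hd : G.dist v k = G.dist v j + 1 := tree_dist_succ G hT hj.symm hv
      by_contra hc
      push_neg at hc
      have hne : G.dist v i ≠ G.dist v k := tree_dist_ne G hT hki.symm v
      have h1 : G.dist v k ≤ G.dist v i + G.dist i k := hT.isConnected.dist_triangle
      have h2 : G.dist i k = 1 := SimpleGraph.dist_eq_one_iff_adj.mpr hki.symm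
      have h3 : G.dist v i + 1 = G.dist v k := by omega
      exact hji (tree_parent_unique G hT hj hki hd.symm h3)

lemma branch_sub_not_mem (hT : G.IsTree) {k i : V} :
    k ∉ ((G.neighborFinset k).erase i).biUnion (fun j => branch G j k) := by
  simp only [Finset.mem_biUnion]
  rintro ⟨j, _, hj⟩
  exact self_not_mem_branch G hj

lemma branch_pairwise (hT : G.IsTree) (k i : V) :
    (↑((G.neighborFinset k).erase i) : Set V).PairwiseDisjoint
      (fun j => branch G j k) := by
  intro a ha b hb hab
  simp only [Finset.coe_erase, Set.mem_diff, Finset.mem_coe,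
    SimpleGraph.mem_neighborFinset] at ha hb
  exact branch_disjoint G hT ha.1 hb.1 hab

/-- The message formula: once `t` dominates all distances within the branch,
the message along an edge aggregates the whole branch. -/
lemma message_formula {A : Type*} [AddCommGroup A] (hT : G.IsTree)
    (Rh : V → A) (R0 : A) (M : ℕ → V → V → A)
    (h0 : ∀ i j, M 0 i j = Rh i)
    (hrec : ∀ t i j, M (t + 1) i j =
      Rh i + ∑ k ∈ (G.neighborFinset i).erase j, (M t k i - R0)) :
    ∀ t, ∀ k i : V, G.Adj k i → (∀ v ∈ branch G k i, G.dist v k ≤ t) →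
      M t k i = (∑ v ∈ branch G k i, Rh v) - (((branch G k i).card : ℤ) - 1) • R0 := by
  intro t
  induction t with
  | zero =>
    intro k i hki hd
    have hb : branch G k i = {k} := by
      apply Finset.eq_singleton_iff_unique_mem.mpr
      refine ⟨self_mem_branch G hT hki, fun v hv => ?_⟩
      have := hd v hv
      have h0' : G.dist v k = 0 := by omega
      exact (hT.isConnected.dist_eq_zero_iff.mp h0')
    rw [h0, hb]
    simp
  | succ t ih =>
    intro k i hki hd
    rw [hrec]
    have hdec := branch_decomp G hT hki
    have key : ∀ j ∈ (G.neighborFinset k).erase i,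
        M t j k = (∑ v ∈ branch G j k, Rh v) - (((branch G j k).card : ℤ) - 1) • R0 := by
      intro j hj
      obtain ⟨hji, hjadj⟩ := Finset.mem_erase.mp hj
      rw [SimpleGraph.mem_neighborFinset] at hjadj
      apply ih j k hjadj.symm
      intro v hv
      have hvin : v ∈ branch G k i := by
        rw [hdec]
        exact Finset.mem_insert_of_mem (Finset.mem_biUnion.mpr ⟨j, hj, hv⟩)
      have h1 := hd v hvin
      rw [mem_branch] at hv
      have h2 : G.dist v k = G.dist v j + 1 := tree_dist_succ G hT hjadj.symm hv
      omega
    rw [Finset.sum_congr rfl (fun j hj => by rw [key j hj])]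
    have hsum : ∑ v ∈ branch G k i, Rh v =
        Rh k + ∑ j ∈ (G.neighborFinset k).erase i, ∑ v ∈ branch G j k, Rh v := by
      rw [hdec, Finset.sum_insert (branch_sub_not_mem G hT),
        Finset.sum_biUnion (branch_pairwise G hT k i)]
    have hcard : ((branch G k i).card : ℤ) =
        1 + ∑ j ∈ (G.neighborFinset k).erase i, ((branch G j k).card : ℤ) := by
      rw [hdec, Finset.card_insert_of_notMem (branch_sub_not_mem G hT),
        Finset.card_biUnion (fun a ha b hb hab => branch_pairwise G hT k i
          (Finset.mem_coe.mpr ha) (Finset.mem_coe.mpr hb) hab)]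
      push_cast
      ring
    rw [hsum, hcard]
    have expand : ∀ j ∈ (G.neighborFinset k).erase i,
        (∑ v ∈ branch G j k, Rh v) - (((branch G j k).card : ℤ) - 1) • R0 - R0 =
        (∑ v ∈ branch G j k, Rh v) - ((branch G j k).card : ℤ) • R0 := by
      intro j _
      rw [sub_smul, one_smul]
      abel
    rw [Finset.sum_congr rfl expand, Finset.sum_sub_distrib, ← Finset.sum_smul]
    have : (1 + ∑ j ∈ (G.neighborFinset k).erase i, ((branch G j k).card : ℤ) - 1)
        = ∑ j ∈ (G.neighborFinset k).erase i, ((branch G j k).card : ℤ) := by ring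
    rw [this]
    abel

end Aux

/-- Global aggregation convergence on a tree: with messages obeying
`M_{ij}^0 = R̂_i` and `M_{ij}^{t+1} = R̂_i + ∑_{k ∈ N(i)\{j}} (M_{ki}^t − R_0)`,
once `t` exceeds the diameter of the tree (i.e. `G.dist u v ≤ t` for all
`u, v`), every agent `i`'s aggregate `R̂_i + ∑_{k ∈ N(i)} (M_{ki}^t − R_0)`
equals the global representation `∑_v R̂_v − (s−1)·R_0`, independent of `i`. -/
theorem tree_message_passing_global_convergence {V : Type*} [Fintype V]
    [DecidableEq V] (G : SimpleGraph V) [DecidableRel G.Adj] (hT : G.IsTree)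
    {A : Type*} [AddCommGroup A]
    (Rh : V → A) (R0 : A) (M : ℕ → V → V → A)
    (h0 : ∀ i j, M 0 i j = Rh i)
    (hrec : ∀ t i j, M (t + 1) i j =
      Rh i + ∑ k ∈ (G.neighborFinset i).erase j, (M t k i - R0))
    (t : ℕ) (ht : ∀ u v : V, G.dist u v ≤ t) :
    ∀ i : V,
      Rh i + ∑ k ∈ G.neighborFinset i, (M t k i - R0) =
        (∑ v, Rh v) - ((Fintype.card V : ℤ) - 1) • R0 := by
  intro i
  have hpair : (↑(G.neighborFinset i) : Set V).PairwiseDisjoint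
      (fun k => branch G k i) := by
    intro a ha b hb hab
    rw [Finset.mem_coe, SimpleGraph.mem_neighborFinset] at ha hb
    exact branch_disjoint G hT ha hb hab
  have hnotmem : i ∉ (G.neighborFinset i).biUnion (fun k => branch G k i) := by
    simp only [Finset.mem_biUnion]
    rintro ⟨k, _, hk⟩
    exact self_not_mem_branch G hk
  have hdec : (univ : Finset V) =
      insert i ((G.neighborFinset i).biUnion (fun k => branch G k i)) := by
    ext v
    simp only [Finset.mem_univ, true_iff, Finset.mem_insert, Finset.mem_biUnion,
      SimpleGraph.mem_neighborFinset]
    by_cases hvi : v = i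
    · exact Or.inl hvi
    · obtain ⟨k, hk, hkd⟩ := tree_parent_exists G hT hvi
      exact Or.inr ⟨k, hk, mem_branch G |>.mpr (by omega)⟩
  have key : ∀ k ∈ G.neighborFinset i,
      M t k i = (∑ v ∈ branch G k i, Rh v) - (((branch G k i).card : ℤ) - 1) • R0 := by
    intro k hk
    rw [SimpleGraph.mem_neighborFinset] at hk
    exact message_formula G hT Rh R0 M h0 hrec t k i hk.symm (fun v _ => ht v k)
  rw [Finset.sum_congr rfl (fun k hk => by rw [key k hk])]
  have hsum : ∑ v, Rh v =
      Rh i + ∑ k ∈ G.neighborFinset i, ∑ v ∈ branch G k i, Rh v := by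
    rw [hdec, Finset.sum_insert hnotmem, Finset.sum_biUnion hpair]
  have hcard : (Fintype.card V : ℤ) =
      1 + ∑ k ∈ G.neighborFinset i, ((branch G k i).card : ℤ) := by
    rw [← Finset.card_univ, hdec, Finset.card_insert_of_notMem hnotmem,
      Finset.card_biUnion (fun a ha b hb hab => hpair
        (Finset.mem_coe.mpr ha) (Finset.mem_coe.mpr hb) hab)]
    push_cast
    ring
  rw [hsum, hcard]
  have expand : ∀ k ∈ G.neighborFinset i,
      (∑ v ∈ branch G k i, Rh v) - (((branch G k i).card : ℤ) - 1) • R0 - R0 =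
      (∑ v ∈ branch G k i, Rh v) - ((branch G k i).card : ℤ) • R0 := by
    intro k _
    rw [sub_smul, one_smul]
    abel
  rw [Finset.sum_congr rfl expand, Finset.sum_sub_distrib, ← Finset.sum_smul]
  have : (1 + ∑ k ∈ G.neighborFinset i, ((branch G k i).card : ℤ) - 1)
      = ∑ k ∈ G.neighborFinset i, ((branch G k i).card : ℤ) := by ring
  rw [this]
  abel
end
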